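/- Let F be a set of pairs (i,j) with 1 ≤ i < j ≤ n, and let Γ_F be the simple graph on vertex set {1,…,n} whose edges are the pairs in F. Then the Lie subalgebra Lie({Ω_{ij} : (i,j) ∈ F}) equals the linear span of the set {Ω_{ij} : i ≠ j and the vertices i and j lie in the same connected component of Γ_F (i.e., i and j are joined by a path in Γ_F)}. -/

import Mathlib

/-!
Write `Ω i j` for `Omega n i j`. The commutation relations
`⁅Ω i j, Ω k l⁆ = δ_jk Ω i l - δ_jl Ω i k - δ_ik Ω j l + δ_il Ω j k` show two things.
First, `⁅Ω i j, Ω j k⁆ = Ω i k` for `i ≠ j ≠ k`, so along a path of `Γ_F` from `i` to `j` the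
generators bracket to `Ω i j`. Second, the bracket of two `Ω`'s of reachable pairs is a
combination of `Ω`'s of reachable pairs, so their span is already a Lie subalgebra.
-/

open Matrix

attribute [local instance 100] LieRing.ofAssociativeRing

/-- `Ω i j = E i j - E j i` where `E i j` is the standard basis matrix. -/
noncomputable def Omega (n : ℕ) (i j : Fin n) : Matrix (Fin n) (Fin n) ℝ :=
  Matrix.single i j 1 - Matrix.single j i 1

/-- The smallest Lie subalgebra (linear subspace closed under the commutator)
of the `n × n` real matrices containing a set `S`. -/
noncomputable def lieGen (n : ℕ) (S : Set (Matrix (Fin n) (Fin n) ℝ)) :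
    LieSubalgebra ℝ (Matrix (Fin n) (Fin n) ℝ) :=
  LieSubalgebra.lieSpan ℝ (Matrix (Fin n) (Fin n) ℝ) S

/-- The simple graph on `{1,…,n}` whose edges are the pairs in `F`. -/
def graphOf (n : ℕ) (F : Set (Fin n × Fin n)) : SimpleGraph (Fin n) where
  Adj a b := a ≠ b ∧ ((a, b) ∈ F ∨ (b, a) ∈ F)
  symm := by
    constructor
    intro a b h
    exact ⟨h.1.symm, h.2.symm⟩
  loopless := by
    constructor
    intro a h
    exact h.1 rfl

theorem LieSubalgebra.coe_lieSpan_eq_span_of_lie_mem_span {R L : Type*} [CommRing R]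
    [LieRing L] [LieAlgebra R L] {s : Set L}
    (hs : ∀ x ∈ s, ∀ y ∈ s, ⁅x, y⁆ ∈ Submodule.span R s) :
    (lieSpan R L s : Submodule R L) = Submodule.span R s := by
  suffices ∀ {x y}, x ∈ Submodule.span R s → y ∈ Submodule.span R s →
      ⁅x, y⁆ ∈ Submodule.span R s by
    refine le_antisymm ?_ submodule_span_le_lieSpan
    change _ ≤ ({ Submodule.span R s with lie_mem' := this } : LieSubalgebra R L)
    exact lieSpan_le.2 Submodule.subset_span
  intro x y hx hy
  induction hx, hy using Submodule.span_induction₂ with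
  | mem_mem x y hx hy => exact hs x hx y hy
  | zero_left y hy => simp
  | zero_right x hx => simp
  | add_left x y z _ _ _ hx hy => simpa using add_mem hx hy
  | add_right x y z _ _ _ hx hy => simpa using add_mem hx hy
  | smul_left r x y _ _ h => simpa using Submodule.smul_mem _ r h
  | smul_right r x y _ _ h => simpa using Submodule.smul_mem _ r h

theorem Matrix.single_mul_single_eq_ite {m R : Type*} [Fintype m] [DecidableEq m] [Semiring R]
    (i j k l : m) (c d : R) :
    single i j c * single k l d = if j = k then single i l (c * d) else 0 := by
  split_ifs with h
  · subst h
    exact single_mul_single_same c i j l d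
  · exact single_mul_single_of_ne c i j k h d

section Omega

variable {n : ℕ}

@[simp]
theorem Omega_self (i : Fin n) : Omega n i i = 0 :=
  sub_self _

theorem Omega_swap (i j : Fin n) : Omega n j i = -Omega n i j :=
  (neg_sub _ _).symm

theorem lie_Omega_Omega (i j k l : Fin n) :
    ⁅Omega n i j, Omega n k l⁆ =
      (if j = k then Omega n i l else 0) - (if j = l then Omega n i k else 0) -
        (if i = k then Omega n j l else 0) + (if i = l then Omega n j k else 0) := by
  simp only [Omega, Ring.lie_def, sub_mul, mul_sub, single_mul_single_eq_ite, mul_one]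
  split_ifs <;> subst_vars <;> (try contradiction) <;> abel

theorem lie_Omega_Omega_of_ne {i j k : Fin n} (hij : i ≠ j) (hjk : j ≠ k) :
    ⁅Omega n i j, Omega n j k⁆ = Omega n i k := by
  simp [lie_Omega_Omega, hij, hjk]

end Omega

def edgeOmegas (n : ℕ) (F : Set (Fin n × Fin n)) : Set (Matrix (Fin n) (Fin n) ℝ) :=
  {M | ∃ p ∈ F, M = Omega n p.1 p.2}

def reachableOmegas (n : ℕ) (F : Set (Fin n × Fin n)) : Set (Matrix (Fin n) (Fin n) ℝ) :=
  {M | ∃ i j : Fin n, i ≠ j ∧ (graphOf n F).Reachable i j ∧ M = Omega n i j}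

section Graph

variable {n : ℕ} {F : Set (Fin n × Fin n)}

theorem Omega_mem_lieGen_of_adj {i j : Fin n} (h : (graphOf n F).Adj i j) :
    Omega n i j ∈ lieGen n (edgeOmegas n F) := by
  rcases h.2 with hF | hF
  · exact LieSubalgebra.subset_lieSpan ⟨(i, j), hF, rfl⟩
  · rw [Omega_swap]
    exact neg_mem (LieSubalgebra.subset_lieSpan ⟨(j, i), hF, rfl⟩)

theorem Omega_mem_lieGen_of_reachable {i j : Fin n} (h : (graphOf n F).Reachable i j) :
    Omega n i j ∈ lieGen n (edgeOmegas n F) := by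
  obtain ⟨w⟩ := h
  induction w with
  | nil => simp
  | @cons a b c hab _ ih =>
    by_cases hbc : b = c
    · subst hbc
      exact Omega_mem_lieGen_of_adj hab
    · rw [← lie_Omega_Omega_of_ne hab.ne hbc]
      exact LieSubalgebra.lie_mem _ (Omega_mem_lieGen_of_adj hab) ih

theorem Omega_mem_span_of_reachable {i j : Fin n} (h : (graphOf n F).Reachable i j) :
    Omega n i j ∈ Submodule.span ℝ (reachableOmegas n F) := by
  by_cases hij : i = j
  · simp [hij]
  · exact Submodule.subset_span ⟨i, j, hij, h, rfl⟩

theorem lie_Omega_mem_span_of_reachable {i j k l : Fin n} (hij : (graphOf n F).Reachable i j)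
    (hkl : (graphOf n F).Reachable k l) :
    ⁅Omega n i j, Omega n k l⁆ ∈ Submodule.span ℝ (reachableOmegas n F) := by
  rw [lie_Omega_Omega]
  refine add_mem (sub_mem (sub_mem ?_ ?_) ?_) ?_ <;> split_ifs with h <;>
    first | exact zero_mem _ | subst h
  · exact Omega_mem_span_of_reachable (hij.trans hkl)
  · exact Omega_mem_span_of_reachable (hij.trans hkl.symm)
  · exact Omega_mem_span_of_reachable (hij.symm.trans hkl)
  · exact Omega_mem_span_of_reachable (hij.symm.trans hkl.symm)

theorem reachable_graphOf_of_mem {p : Fin n × Fin n} (hp : p ∈ F) :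
    (graphOf n F).Reachable p.1 p.2 := by
  by_cases h : p.1 = p.2
  · exact h ▸ SimpleGraph.Reachable.refl _
  · exact SimpleGraph.Adj.reachable ⟨h, Or.inl hp⟩

end Graph

theorem lieGen_eq_span_of_connected_pairs_general (n : ℕ) (F : Set (Fin n × Fin n)) :
    (lieGen n {M | ∃ p ∈ F, M = Omega n p.1 p.2} : Set (Matrix (Fin n) (Fin n) ℝ)) =
      (Submodule.span ℝ
        {M | ∃ i j : Fin n, i ≠ j ∧ (graphOf n F).Reachable i j ∧ M = Omega n i j} :
        Set (Matrix (Fin n) (Fin n) ℝ)) := by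
  change (lieGen n (edgeOmegas n F) : Set (Matrix (Fin n) (Fin n) ℝ)) =
    (Submodule.span ℝ (reachableOmegas n F) : Set (Matrix (Fin n) (Fin n) ℝ))
  have hspan : (lieGen n (reachableOmegas n F)).toSubmodule =
      Submodule.span ℝ (reachableOmegas n F) := by
    refine LieSubalgebra.coe_lieSpan_eq_span_of_lie_mem_span ?_
    rintro _ ⟨i, j, -, hij, rfl⟩ _ ⟨k, l, -, hkl, rfl⟩
    exact lie_Omega_mem_span_of_reachable hij hkl
  have hle : lieGen n (edgeOmegas n F) ≤ lieGen n (reachableOmegas n F) := by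
    refine LieSubalgebra.lieSpan_le.2 ?_
    rintro _ ⟨p, hp, rfl⟩
    rw [SetLike.mem_coe, ← LieSubalgebra.mem_toSubmodule, hspan]
    exact Omega_mem_span_of_reachable (reachable_graphOf_of_mem hp)
  have hge : lieGen n (reachableOmegas n F) ≤ lieGen n (edgeOmegas n F) := by
    refine LieSubalgebra.lieSpan_le.2 ?_
    rintro _ ⟨i, j, -, hij, rfl⟩
    exact Omega_mem_lieGen_of_reachable hij
  rw [le_antisymm hle hge, ← LieSubalgebra.coe_toSubmodule, hspan]

theorem lieGen_eq_span_of_connected_pairs (n : ℕ) (F : Set (Fin n × Fin n))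
    (hF : ∀ p ∈ F, p.1 < p.2) :
    (lieGen n {M | ∃ p ∈ F, M = Omega n p.1 p.2} : Set (Matrix (Fin n) (Fin n) ℝ)) =
      (Submodule.span ℝ
        {M | ∃ i j : Fin n, i ≠ j ∧ (graphOf n F).Reachable i j ∧ M = Omega n i j} :
        Set (Matrix (Fin n) (Fin n) ℝ)) :=
  lieGen_eq_span_of_connected_pairs_general n F
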